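/- Let M be an infinite complete metric space. Then Lip_0(M) contains a closed linear subspace isomorphic to c_0. -/

import Mathlib

open Metric Set Filter Topology ZeroAtInfty

/-- The Lipschitz norm (best Lipschitz constant, as a supremum of difference quotients). -/
noncomputable def lipNorm {M : Type*} [MetricSpace M] (f : M → ℝ) : ℝ :=
  sSup {r : ℝ | ∃ x y : M, x ≠ y ∧ r = |f x - f y| / dist x y}

/-- `f` strongly attains its Lipschitz norm. -/
def StronglyAttains {M : Type*} [MetricSpace M] (f : M → ℝ) : Prop :=
  ∃ x y : M, x ≠ y ∧ (f x - f y) / dist x y = lipNorm f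

/-- `f` is Lipschitz with (real) constant `K`. -/
def IsLipWith {M : Type*} [MetricSpace M] (K : ℝ) (f : M → ℝ) : Prop :=
  ∀ x y : M, |f x - f y| ≤ K * dist x y

/-- Distance between two subsets of a metric space. -/
noncomputable def setDist {M : Type*} [MetricSpace M] (A B : Set M) : ℝ :=
  sInf {r : ℝ | ∃ a ∈ A, ∃ b ∈ B, r = dist a b}

/-- A subset is uniformly discrete. -/
def UnifDiscreteOn {M : Type*} [MetricSpace M] (s : Set M) : Prop :=
  ∃ r > 0, ∀ x ∈ s, ∀ y ∈ s, x ≠ y → r ≤ dist x y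

/-- `R(x)`: the supremum of radii `R ≥ 0` with `closedBall x R = {x}`. -/
noncomputable def isolRad {M : Type*} [MetricSpace M] (x : M) : ℝ :=
  sSup {R : ℝ | 0 ≤ R ∧ Metric.closedBall x R = {x}}

/-! By a theorem on infinite Hausdorff spaces, `M` has an infinite subset `S` that is discrete in
the induced topology, so every `x ∈ S` has a positive distance `s x` to `S \ {x}` and a point
`N x ∈ S \ {x}` with `dist x (N x) < 2 s x`. There is an injective sequence `pₙ` in `S` whose
near points `N pₙ` avoid all the `pₘ` (take a fibre of `N` if one is infinite, else choose
greedily). It gives tents of height `s pₙ / 2` centred at `pₙ` with pairwise disjoint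
supports, none of which reaches any `N pₙ`. The map `v ↦ ∑ vₙ tentₙ`, shifted to vanish at `z`,
is then `2 ‖v‖`-Lipschitz, and the pair `(pₙ, N pₙ)` shows that its Lipschitz norm is at least
`|vₙ| / 4`. -/

section LipNorm

variable {M : Type*} [MetricSpace M]

lemma lipNorm_nonneg (f : M → ℝ) : 0 ≤ lipNorm f :=
  Real.sSup_nonneg (by rintro r ⟨x, y, -, rfl⟩; positivity)

lemma lipNorm_le {f : M → ℝ} {K : ℝ} (hK : 0 ≤ K) (hf : IsLipWith K f) : lipNorm f ≤ K :=
  Real.sSup_le (by rintro r ⟨x, y, hxy, rfl⟩; exact (div_le_iff₀ (dist_pos.2 hxy)).2 (hf x y)) hK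

lemma abs_sub_le_lipNorm_mul {f : M → ℝ} {K : ℝ} (hf : IsLipWith K f) (x y : M) :
    |f x - f y| ≤ lipNorm f * dist x y := by
  rcases eq_or_ne x y with rfl | hxy
  · simp
  have hbdd : BddAbove {r : ℝ | ∃ x y : M, x ≠ y ∧ r = |f x - f y| / dist x y} :=
    ⟨K, by rintro r ⟨a, b, hab, rfl⟩; exact (div_le_iff₀ (dist_pos.2 hab)).2 (hf a b)⟩
  exact (div_le_iff₀ (dist_pos.2 hxy)).1 (le_csSup hbdd ⟨x, y, hxy, rfl⟩)

end LipNorm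

section Tent

variable {M : Type*} [MetricSpace M]

def tent (p : M) (t : ℝ) (x : M) : ℝ := max (t - dist x p) 0

lemma tent_eq_zero {p x : M} {t : ℝ} (h : t ≤ dist x p) : tent p t x = 0 :=
  max_eq_right (by linarith)

lemma tent_self (p : M) {t : ℝ} (ht : 0 ≤ t) : tent p t p = t := by
  simp [tent, ht]

lemma abs_tent_sub_tent_le (p : M) (t : ℝ) (x y : M) : |tent p t x - tent p t y| ≤ dist x y := by
  refine (abs_max_sub_max_le_abs _ _ _).trans ?_
  rw [sub_sub_sub_cancel_left, dist_comm x y]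
  exact abs_dist_sub_le y x p

end Tent

/-- The tents of height `radius n` at `center n` have pairwise disjoint supports and all vanish
at every `partner n`, so the pair `(center n, partner n)` detects the `n`-th coefficient of a
sum of tents. -/
structure SeparatedTents (M : Type*) [MetricSpace M] where
  center : ℕ → M
  partner : ℕ → M
  radius : ℕ → ℝ
  radius_pos : ∀ n, 0 < radius n
  radius_add_radius_le : ∀ m n, m ≠ n → radius m + radius n ≤ dist (center m) (center n)
  radius_le_dist_partner : ∀ m n, radius m ≤ dist (partner n) (center m)
  dist_partner_le : ∀ n, dist (center n) (partner n) ≤ 4 * radius n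

namespace SeparatedTents

variable {M : Type*} [MetricSpace M] (D : SeparatedTents M)

def map {N : Type*} [MetricSpace N] {f : M → N} (hf : Isometry f) : SeparatedTents N where
  center := f ∘ D.center
  partner := f ∘ D.partner
  radius := D.radius
  radius_pos := D.radius_pos
  radius_add_radius_le m n hmn := by simpa [hf.dist_eq] using D.radius_add_radius_le m n hmn
  radius_le_dist_partner m n := by simpa [hf.dist_eq] using D.radius_le_dist_partner m n
  dist_partner_le n := by simpa [hf.dist_eq] using D.dist_partner_le n

lemma exists_forall_ne_tent_eq_zero (x : M) :
    ∃ n, ∀ k ≠ n, tent (D.center k) (D.radius k) x = 0 := by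
  by_cases h : ∃ n, dist x (D.center n) < D.radius n
  · obtain ⟨n, hn⟩ := h
    refine ⟨n, fun k hk => tent_eq_zero ?_⟩
    linarith [D.radius_add_radius_le k n hk, dist_triangle_left (D.center k) (D.center n) x]
  · push Not at h
    exact ⟨0, fun k _ => tent_eq_zero (h k)⟩

noncomputable def tentSum (v : ℕ → ℝ) (x : M) : ℝ := ∑' n, v n * tent (D.center n) (D.radius n) x

lemma tentSum_eq_sum {x : M} {n : ℕ} (hn : ∀ k ≠ n, tent (D.center k) (D.radius k) x = 0)
    {s : Finset ℕ} (hs : n ∈ s) (v : ℕ → ℝ) :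
    D.tentSum v x = ∑ k ∈ s, v k * tent (D.center k) (D.radius k) x :=
  tsum_eq_sum fun k hk => by rw [hn k (ne_of_mem_of_not_mem hs hk).symm, mul_zero]

lemma tentSum_add (u v : ℕ → ℝ) : D.tentSum (u + v) = D.tentSum u + D.tentSum v := by
  funext x
  obtain ⟨n, hn⟩ := D.exists_forall_ne_tent_eq_zero x
  simp only [D.tentSum_eq_sum hn (Finset.mem_singleton_self n), Finset.sum_singleton,
    Pi.add_apply, add_mul]

lemma tentSum_smul (c : ℝ) (v : ℕ → ℝ) : D.tentSum (c • v) = c • D.tentSum v := by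
  funext x
  obtain ⟨n, hn⟩ := D.exists_forall_ne_tent_eq_zero x
  rw [Pi.smul_apply, D.tentSum_eq_sum hn (Finset.mem_singleton_self n),
    D.tentSum_eq_sum hn (Finset.mem_singleton_self n), Finset.sum_singleton, Finset.sum_singleton,
    Pi.smul_apply, smul_eq_mul, smul_eq_mul, mul_assoc]

lemma tentSum_center (v : ℕ → ℝ) (n : ℕ) : D.tentSum v (D.center n) = v n * D.radius n := by
  have hn : ∀ k ≠ n, tent (D.center k) (D.radius k) (D.center n) = 0 := fun k hk =>
    tent_eq_zero (by
      rw [dist_comm]; linarith [D.radius_add_radius_le k n hk, D.radius_pos n])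
  rw [D.tentSum_eq_sum hn (Finset.mem_singleton_self n), Finset.sum_singleton,
    tent_self _ (D.radius_pos n).le]

lemma tentSum_partner (v : ℕ → ℝ) (n : ℕ) : D.tentSum v (D.partner n) = 0 := by
  have h : ∀ k, tent (D.center k) (D.radius k) (D.partner n) = 0 := fun k =>
    tent_eq_zero (D.radius_le_dist_partner k n)
  simp [tentSum, h]

lemma isLipWith_tentSum {v : ℕ → ℝ} {B : ℝ} (hv : ∀ k, |v k| ≤ B) :
    IsLipWith (2 * B) (D.tentSum v) := by
  intro x y
  obtain ⟨n, hn⟩ := D.exists_forall_ne_tent_eq_zero x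
  obtain ⟨m, hm⟩ := D.exists_forall_ne_tent_eq_zero y
  have hB : 0 ≤ B := (abs_nonneg _).trans (hv 0)
  rw [D.tentSum_eq_sum hn (Finset.mem_insert_self n {m}),
    D.tentSum_eq_sum hm (Finset.mem_insert_of_mem (Finset.mem_singleton_self m)),
    ← Finset.sum_sub_distrib]
  calc |∑ k ∈ {n, m}, (v k * tent (D.center k) (D.radius k) x
          - v k * tent (D.center k) (D.radius k) y)|
      ≤ ∑ k ∈ {n, m}, B * dist x y := by
        refine (Finset.abs_sum_le_sum_abs _ _).trans (Finset.sum_le_sum fun k _ => ?_)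
        rw [← mul_sub, abs_mul]
        exact mul_le_mul (hv k) (abs_tent_sub_tent_le _ _ x y) (abs_nonneg _) hB
    _ = (Finset.card {n, m} : ℝ) * (B * dist x y) := by rw [Finset.sum_const, nsmul_eq_mul]
    _ ≤ 2 * (B * dist x y) := by gcongr; exact_mod_cast Finset.card_le_two
    _ = 2 * B * dist x y := by ring

noncomputable def toLin (z : M) : C₀(ℕ, ℝ) →ₗ[ℝ] (M → ℝ) where
  toFun v x := D.tentSum v x - D.tentSum v z
  map_add' u v := by
    funext x
    simp only [ZeroAtInftyContinuousMap.coe_add, tentSum_add, Pi.add_apply]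
    ring
  map_smul' c v := by
    funext x
    simp only [ZeroAtInftyContinuousMap.coe_smul, tentSum_smul, Pi.smul_apply, smul_eq_mul, RingHom.id_apply]
    ring

lemma toLin_apply (z : M) (v : C₀(ℕ, ℝ)) (x : M) :
    D.toLin z v x = D.tentSum v x - D.tentSum v z := rfl

lemma toLin_apply_self (z : M) (v : C₀(ℕ, ℝ)) : D.toLin z v z = 0 := sub_self _

lemma isLipWith_toLin (z : M) (v : C₀(ℕ, ℝ)) : IsLipWith (2 * ‖v‖) (D.toLin z v) := by
  intro x y
  rw [toLin_apply, toLin_apply, sub_sub_sub_cancel_right]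
  refine D.isLipWith_tentSum (fun k => ?_) x y
  simpa [← ZeroAtInftyContinuousMap.norm_toBCF_eq_norm] using v.toBCF.norm_coe_le_norm k

lemma lipNorm_toLin_le (z : M) (v : C₀(ℕ, ℝ)) : lipNorm (D.toLin z v) ≤ 2 * ‖v‖ :=
  lipNorm_le (by positivity) (D.isLipWith_toLin z v)

lemma norm_le_four_mul_lipNorm_toLin (z : M) (v : C₀(ℕ, ℝ)) :
    ‖v‖ ≤ 4 * lipNorm (D.toLin z v) := by
  have hL := lipNorm_nonneg (D.toLin z v)
  rw [← ZeroAtInftyContinuousMap.norm_toBCF_eq_norm, BoundedContinuousFunction.norm_le (by positivity)]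
  intro n
  have hpair := abs_sub_le_lipNorm_mul (D.isLipWith_toLin z v) (D.center n) (D.partner n)
  rw [toLin_apply, toLin_apply, sub_sub_sub_cancel_right, tentSum_center, tentSum_partner,
    sub_zero, abs_mul, abs_of_pos (D.radius_pos n)] at hpair
  have hr := D.radius_pos n
  have hd : lipNorm (D.toLin z v) * dist (D.center n) (D.partner n)
      ≤ lipNorm (D.toLin z v) * (4 * D.radius n) := mul_le_mul_of_nonneg_left (D.dist_partner_le n) hL
  change |v n| ≤ _
  nlinarith

end SeparatedTents

theorem Function.exists_injective_nat_apply_ne {α : Type*} [Infinite α] (f : α → α)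
    (hf : ∀ x, f x ≠ x) : ∃ p : ℕ → α, Function.Injective p ∧ ∀ m n, f (p m) ≠ p n := by
  by_cases hfib : ∃ w, (f ⁻¹' {w}).Infinite
  · obtain ⟨w, hw⟩ := hfib
    have hp : ∀ n, f (hw.natEmbedding _ n) = w := fun n => (hw.natEmbedding _ n).2
    refine ⟨fun n => hw.natEmbedding _ n, fun a b hab => (hw.natEmbedding _).injective
      (Subtype.ext hab), fun m n hmn => hf _ ((hp n).trans ((hp m).symm.trans hmn))⟩
  · push Not at hfib
    -- With finite fibres, each finite set only rules out finitely many next points.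
    obtain ⟨p, -, hp⟩ := exists_seq_of_forall_finset_exists (fun _ => True)
      (fun x y => x ≠ y ∧ f x ≠ y ∧ f y ≠ x) fun s _ => by
        have hbad : ((s : Set α) ∪ f '' s ∪ f ⁻¹' s).Finite :=
          (s.finite_toSet.union (s.finite_toSet.image f)).union
            (s.finite_toSet.preimage' fun b _ => hfib b)
        obtain ⟨y, hy⟩ := hbad.exists_notMem
        simp only [Set.mem_union, Finset.mem_coe, Set.mem_image, Set.mem_preimage, not_or,
          not_exists, not_and] at hy
        exact ⟨y, trivial, fun x hx => ⟨fun h => hy.1.1 (h ▸ hx), hy.1.2 x hx, fun h => hy.2 (h ▸ hx)⟩⟩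
    refine ⟨p, fun a b hab => ?_, fun m n => ?_⟩
    · by_contra hne
      rcases lt_or_gt_of_ne hne with h | h
      · exact (hp a b h).1 hab
      · exact (hp b a h).1 hab.symm
    · rcases lt_trichotomy m n with h | rfl | h
      · exact (hp m n h).2.1
      · exact hf _
      · exact (hp n m h).2.2

namespace SeparatedTents

variable {M : Type*} [MetricSpace M]

theorem nonempty_of_discreteTopology [DiscreteTopology M] [Infinite M] :
    Nonempty (SeparatedTents M) := by
  set s : M → ℝ := fun x => infDist x {x}ᶜ
  have hne : ∀ x : M, ({x}ᶜ : Set M).Nonempty := fun x => exists_ne x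
  have hs_pos : ∀ x, 0 < s x := fun x =>
    ((isClosed_discrete _).notMem_iff_infDist_pos (hne x)).1 (by simp)
  have hs_le : ∀ x y, x ≠ y → s x ≤ dist x y := fun x y h => infDist_le_dist_of_mem h.symm
  choose N hN_ne hN_lt using fun x =>
    (infDist_lt_iff (hne x)).1 (by linarith [hs_pos x] : s x < 2 * s x)
  obtain ⟨p, hp_inj, hp⟩ := Function.exists_injective_nat_apply_ne N hN_ne
  exact ⟨{
    center := p
    partner := fun n => N (p n)
    radius := fun n => s (p n) / 2
    radius_pos := fun n => half_pos (hs_pos _)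
    radius_add_radius_le := fun m n hmn => by
      linarith [hs_le _ _ (hp_inj.ne hmn), hs_le _ _ (hp_inj.ne hmn.symm), dist_comm (p m) (p n)]
    radius_le_dist_partner := fun m n => by
      linarith [hs_le _ _ (hp n m).symm, hs_pos (p m), dist_comm (p m) (N (p n))]
    dist_partner_le := fun n => by linarith [hN_lt (p n)] }⟩

theorem nonempty_of_infinite [Infinite M] : Nonempty (SeparatedTents M) := by
  obtain ⟨S, hS, _⟩ := exists_infinite_discreteTopology M
  have : Infinite S := hS.to_subtype
  obtain ⟨D⟩ := nonempty_of_discreteTopology (M := S)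
  exact ⟨D.map isometry_subtype_coe⟩

end SeparatedTents

theorem stmt15_general {M : Type*} [MetricSpace M] [Infinite M] (z : M) :
    ∃ (T : C₀(ℕ, ℝ) →ₗ[ℝ] (M → ℝ)) (c C : ℝ), 0 < c ∧ 0 < C ∧
      ∀ v : C₀(ℕ, ℝ),
        T v z = 0 ∧
        IsLipWith (C * ‖v‖) (T v) ∧
        c * ‖v‖ ≤ lipNorm (T v) ∧ lipNorm (T v) ≤ C * ‖v‖ := by
  obtain ⟨D⟩ := SeparatedTents.nonempty_of_infinite (M := M)
  refine ⟨D.toLin z, 1 / 4, 2, by norm_num, by norm_num, fun v =>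
    ⟨D.toLin_apply_self z v, D.isLipWith_toLin z v, ?_, D.lipNorm_toLin_le z v⟩⟩
  linarith [D.norm_le_four_mul_lipNorm_toLin z v]

/-- for every infinite complete metric space `M`, `Lip_0(M)` contains a
(closed) subspace isomorphic to `c₀`. -/
theorem stmt15 {M : Type*} [MetricSpace M] [CompleteSpace M] [Infinite M] (z : M) :
    ∃ (T : C₀(ℕ, ℝ) →ₗ[ℝ] (M → ℝ)) (c C : ℝ), 0 < c ∧ 0 < C ∧
      ∀ v : C₀(ℕ, ℝ),
        T v z = 0 ∧
        IsLipWith (C * ‖v‖) (T v) ∧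
        c * ‖v‖ ≤ lipNorm (T v) ∧ lipNorm (T v) ≤ C * ‖v‖ :=
  stmt15_general z
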